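/- Let ρ ∈ [0, 1) and let π_ρ : ℝ² → ℝ be the bivariate Gaussian density π_ρ(x,y) = (2π√(1−ρ²))⁻¹ exp(−(x² − 2ρxy + y²)/(2(1−ρ²))). Let μ₁, μ₂ ∈ ℝ and α, β > 0 satisfy α + μ₁² = 1 and β + μ₂² = 1, and let P be the Gaussian measure on ℝ with mean μ₁ and variance α and Q the Gaussian measure with mean μ₂ and variance β. Then the supremum over all couplings R of (P, Q) of ∫ log(1/π_ρ(x,y)) dR(x,y) equals log(2π√(1−ρ²)) + (1 + ρ(√(αβ) − μ₁μ₂))/(1−ρ²), and this supremum is attained. -/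

import Mathlib

/-!
Expanding the logarithm,
`∫ log (1/π_ρ) dR = log (2π√(1-ρ²)) + (E[x²] - 2ρ E[xy] + E[y²]) / (2(1-ρ²))`.
The marginals fix `E[x²] = E[y²] = 1` and `E[xy] = μ₁μ₂ + Cov_R(x, y)`, so for `ρ ≥ 0` one has
to minimise the covariance. Cauchy–Schwarz gives `Cov_R(x, y) ≥ -√(αβ)`, with equality for the
antithetic coupling `(μ₁ + √α Z, μ₂ - √β Z)`, `Z` standard normal.
-/

open MeasureTheory ProbabilityTheory Real
open scoped NNReal

section Covariance

variable {Ω : Type*} {mΩ : MeasurableSpace Ω} {μ : Measure Ω} [IsFiniteMeasure μ]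
  {X Y : Ω → ℝ}

lemma sq_covariance_le_variance_mul_variance (hX : MemLp X 2 μ) (hY : MemLp Y 2 μ) :
    cov[X, Y; μ] ^ 2 ≤ Var[X; μ] * Var[Y; μ] := by
  have hquad : ∀ t : ℝ, 0 ≤ Var[Y; μ] * (t * t) + 2 * cov[X, Y; μ] * t + Var[X; μ] := by
    intro t
    have h := variance_nonneg (fun ω ↦ X ω + t * Y ω) μ
    rw [variance_fun_add hX (hY.const_mul t), covariance_const_mul_right,
      variance_const_mul] at h
    linarith
  have h := discrim_le_zero hquad
  rw [discrim] at h
  linarith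

lemma neg_sqrt_variance_mul_le_covariance (hX : MemLp X 2 μ) (hY : MemLp Y 2 μ) :
    -√(Var[X; μ] * Var[Y; μ]) ≤ cov[X, Y; μ] :=
  neg_le_of_abs_le (abs_le_sqrt (sq_covariance_le_variance_mul_variance hX hY))

end Covariance

lemma integral_sq_gaussianReal (μ : ℝ) (v : ℝ≥0) :
    ∫ x, x ^ 2 ∂ gaussianReal μ v = v + μ ^ 2 := by
  have h := variance_eq_sub (memLp_id_gaussianReal (μ := μ) (v := v) 2)
  rw [variance_id_gaussianReal] at h
  simp only [id_eq, Pi.pow_apply, integral_id_gaussianReal] at h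
  linarith

lemma gaussianReal_zero_one_map_const_add_mul {m c : ℝ} {v : ℝ≥0} (hc : c ^ 2 = v) :
    (gaussianReal 0 1).map (fun z ↦ m + c * z) = gaussianReal m v := by
  have hcomp : (fun z ↦ m + c * z) = (m + ·) ∘ (c * ·) := rfl
  rw [hcomp, ← Measure.map_map (measurable_const_add m) (measurable_const_mul c),
    gaussianReal_map_const_mul, gaussianReal_map_const_add, mul_zero, zero_add, mul_one]
  exact congrArg _ (NNReal.coe_injective hc)

section Coupling

variable {P Q : Measure ℝ} {R : Measure (ℝ × ℝ)}

lemma memLp_fst_of_map_fst_eq {p : ENNReal} (h : R.map Prod.fst = P) (hP : MemLp id p P) :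
    MemLp Prod.fst p R := by
  subst h
  exact (memLp_map_measure_iff aestronglyMeasurable_id measurable_fst.aemeasurable).1 hP

lemma memLp_snd_of_map_snd_eq {p : ENNReal} (h : R.map Prod.snd = Q) (hQ : MemLp id p Q) :
    MemLp Prod.snd p R := by
  subst h
  exact (memLp_map_measure_iff aestronglyMeasurable_id measurable_snd.aemeasurable).1 hQ

lemma neg_sqrt_variance_mul_le_covariance_fst_snd [IsFiniteMeasure R]
    (h₁ : R.map Prod.fst = P) (h₂ : R.map Prod.snd = Q) (hP : MemLp id 2 P)
    (hQ : MemLp id 2 Q) :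
    -√(Var[id; P] * Var[id; Q]) ≤ cov[Prod.fst, Prod.snd; R] := by
  rw [← h₁, ← h₂, variance_id_map measurable_fst.aemeasurable,
    variance_id_map measurable_snd.aemeasurable]
  exact neg_sqrt_variance_mul_le_covariance (memLp_fst_of_map_fst_eq h₁ hP)
    (memLp_snd_of_map_snd_eq h₂ hQ)

end Coupling

noncomputable def bivariateGaussianPDF (ρ : ℝ) (q : ℝ × ℝ) : ℝ :=
  (2 * π * √(1 - ρ ^ 2))⁻¹ *
    exp (-(q.1 ^ 2 - 2 * ρ * q.1 * q.2 + q.2 ^ 2) / (2 * (1 - ρ ^ 2)))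

lemma log_inv_bivariateGaussianPDF {ρ : ℝ} (hρ : ρ ^ 2 < 1) (q : ℝ × ℝ) :
    log (bivariateGaussianPDF ρ q)⁻¹ =
      log (2 * π * √(1 - ρ ^ 2)) +
        (q.1 ^ 2 - 2 * ρ * (q.1 * q.2) + q.2 ^ 2) / (2 * (1 - ρ ^ 2)) := by
  have hC : 2 * π * √(1 - ρ ^ 2) ≠ 0 := by
    have : 0 < √(1 - ρ ^ 2) := sqrt_pos.2 (by linarith)
    positivity
  rw [bivariateGaussianPDF, log_inv, log_mul (inv_ne_zero hC) (exp_ne_zero _), log_inv, log_exp]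
  ring

lemma integral_log_inv_bivariateGaussianPDF {ρ : ℝ} (hρ : ρ ^ 2 < 1) {R : Measure (ℝ × ℝ)}
    [IsProbabilityMeasure R] (hX : MemLp Prod.fst 2 R) (hY : MemLp Prod.snd 2 R) :
    ∫ q, log (bivariateGaussianPDF ρ q)⁻¹ ∂ R =
      log (2 * π * √(1 - ρ ^ 2)) +
        (∫ q, q.1 ^ 2 ∂ R - 2 * ρ * ∫ q, q.1 * q.2 ∂ R + ∫ q, q.2 ^ 2 ∂ R) /
          (2 * (1 - ρ ^ 2)) := by
  have hX2 : Integrable (fun q : ℝ × ℝ ↦ q.1 ^ 2) R := hX.integrable_sq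
  have hY2 : Integrable (fun q : ℝ × ℝ ↦ q.2 ^ 2) R := hY.integrable_sq
  have hXY : Integrable (fun q : ℝ × ℝ ↦ 2 * ρ * (q.1 * q.2)) R :=
    (hX.integrable_mul hY).const_mul _
  have hX2XY : Integrable (fun q : ℝ × ℝ ↦ q.1 ^ 2 - 2 * ρ * (q.1 * q.2)) R := hX2.sub hXY
  have hQ : Integrable (fun q : ℝ × ℝ ↦ q.1 ^ 2 - 2 * ρ * (q.1 * q.2) + q.2 ^ 2) R :=
    hX2XY.add hY2
  simp_rw [log_inv_bivariateGaussianPDF hρ, div_eq_inv_mul _ (2 * (1 - ρ ^ 2))]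
  rw [integral_add (integrable_const _) (hQ.const_mul _), integral_const, integral_const_mul,
    integral_add hX2XY hY2, integral_sub hX2 hXY, integral_const_mul]
  simp

section AntitheticCoupling

variable (μ₁ μ₂ : ℝ) (α β : ℝ≥0)

noncomputable def gaussianAntitheticCoupling : Measure (ℝ × ℝ) :=
  (gaussianReal 0 1).map fun z ↦ (μ₁ + √α * z, μ₂ - √β * z)

instance : IsProbabilityMeasure (gaussianAntitheticCoupling μ₁ μ₂ α β) :=
  Measure.isProbabilityMeasure_map (by fun_prop)

lemma map_fst_gaussianAntitheticCoupling :
    (gaussianAntitheticCoupling μ₁ μ₂ α β).map Prod.fst = gaussianReal μ₁ α := by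
  rw [gaussianAntitheticCoupling, Measure.map_map measurable_fst (by fun_prop)]
  exact gaussianReal_zero_one_map_const_add_mul (sq_sqrt α.coe_nonneg)

lemma map_snd_gaussianAntitheticCoupling :
    (gaussianAntitheticCoupling μ₁ μ₂ α β).map Prod.snd = gaussianReal μ₂ β := by
  rw [gaussianAntitheticCoupling, Measure.map_map measurable_snd (by fun_prop)]
  simp_rw [Function.comp_def, sub_eq_add_neg, ← neg_mul]
  exact gaussianReal_zero_one_map_const_add_mul (by rw [neg_sq, sq_sqrt β.coe_nonneg])

lemma covariance_gaussianAntitheticCoupling :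
    cov[Prod.fst, Prod.snd; gaussianAntitheticCoupling μ₁ μ₂ α β] = -√(α * β) := by
  have hid : Integrable (fun z : ℝ ↦ z) (gaussianReal 0 1) :=
    (memLp_id_gaussianReal 1).integrable le_rfl
  rw [gaussianAntitheticCoupling, covariance_map_fun (by fun_prop) (by fun_prop) (by fun_prop),
    covariance_const_add_left (hid.const_mul _), covariance_const_sub_right (hid.const_mul _),
    covariance_const_mul_left, covariance_const_mul_right,
    covariance_self aemeasurable_id', variance_fun_id_gaussianReal, sqrt_mul α.coe_nonneg]
  simp

end AntitheticCoupling

section GaussianCoupling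

variable {μ₁ μ₂ : ℝ} {α β : ℝ≥0} {R : Measure (ℝ × ℝ)} [IsProbabilityMeasure R]

lemma integral_log_inv_bivariateGaussianPDF_of_map_eq_gaussianReal {ρ : ℝ} (hρ : ρ ^ 2 < 1)
    (h₁ : R.map Prod.fst = gaussianReal μ₁ α) (h₂ : R.map Prod.snd = gaussianReal μ₂ β) :
    ∫ q, log (bivariateGaussianPDF ρ q)⁻¹ ∂ R =
      log (2 * π * √(1 - ρ ^ 2)) +
        (α + μ₁ ^ 2 - 2 * ρ * (cov[Prod.fst, Prod.snd; R] + μ₁ * μ₂) + (β + μ₂ ^ 2)) /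
          (2 * (1 - ρ ^ 2)) := by
  have hX := memLp_fst_of_map_fst_eq h₁ (memLp_id_gaussianReal 2)
  have hY := memLp_snd_of_map_snd_eq h₂ (memLp_id_gaussianReal 2)
  have hX1 : ∫ q, q.1 ∂ R = μ₁ := by
    rw [← integral_id_gaussianReal (μ := μ₁) (v := α), ← h₁,
      integral_map measurable_fst.aemeasurable (by fun_prop)]
  have hY1 : ∫ q, q.2 ∂ R = μ₂ := by
    rw [← integral_id_gaussianReal (μ := μ₂) (v := β), ← h₂,
      integral_map measurable_snd.aemeasurable (by fun_prop)]
  have hX2 : ∫ q, q.1 ^ 2 ∂ R = α + μ₁ ^ 2 := by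
    rw [← integral_sq_gaussianReal, ← h₁,
      integral_map measurable_fst.aemeasurable (by fun_prop)]
  have hY2 : ∫ q, q.2 ^ 2 ∂ R = β + μ₂ ^ 2 := by
    rw [← integral_sq_gaussianReal, ← h₂,
      integral_map measurable_snd.aemeasurable (by fun_prop)]
  have hXY : ∫ q, q.1 * q.2 ∂ R = cov[Prod.fst, Prod.snd; R] + μ₁ * μ₂ := by
    rw [covariance_eq_sub hX hY]
    simp only [Pi.mul_apply, hX1, hY1]
    ring
  rw [integral_log_inv_bivariateGaussianPDF hρ hX hY, hX2, hY2, hXY]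

lemma neg_sqrt_mul_le_covariance_of_map_eq_gaussianReal
    (h₁ : R.map Prod.fst = gaussianReal μ₁ α) (h₂ : R.map Prod.snd = gaussianReal μ₂ β) :
    -√(α * β) ≤ cov[Prod.fst, Prod.snd; R] := by
  simpa only [variance_id_gaussianReal] using
    neg_sqrt_variance_mul_le_covariance_fst_snd h₁ h₂ (memLp_id_gaussianReal 2)
      (memLp_id_gaussianReal 2)

end GaussianCoupling

theorem stmt_7_general (ρ : ℝ) (hρ0 : 0 ≤ ρ) (hρ1 : ρ < 1)
    (μ₁ μ₂ : ℝ) (α β : NNReal)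
    (hα1 : (α : ℝ) + μ₁ ^ 2 = 1) (hβ1 : (β : ℝ) + μ₂ ^ 2 = 1) :
    IsGreatest
      {v : ℝ | ∃ R : Measure (ℝ × ℝ), IsProbabilityMeasure R ∧
        R.map Prod.fst = gaussianReal μ₁ α ∧
        R.map Prod.snd = gaussianReal μ₂ β ∧
        v = ∫ q : ℝ × ℝ,
          Real.log ((2 * Real.pi * Real.sqrt (1 - ρ ^ 2))⁻¹ *
            Real.exp (-(q.1 ^ 2 - 2 * ρ * q.1 * q.2 + q.2 ^ 2) / (2 * (1 - ρ ^ 2))))⁻¹ ∂ R}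
      (Real.log (2 * Real.pi * Real.sqrt (1 - ρ ^ 2)) +
        (1 + ρ * (Real.sqrt ((α : ℝ) * (β : ℝ)) - μ₁ * μ₂)) / (1 - ρ ^ 2)) := by
  have hρ : ρ ^ 2 < 1 := by nlinarith
  have hvalue (R : Measure (ℝ × ℝ)) [IsProbabilityMeasure R]
      (h₁ : R.map Prod.fst = gaussianReal μ₁ α) (h₂ : R.map Prod.snd = gaussianReal μ₂ β) :
      ∫ q, log (bivariateGaussianPDF ρ q)⁻¹ ∂ R =
        log (2 * π * √(1 - ρ ^ 2)) +
          (1 - ρ * (cov[Prod.fst, Prod.snd; R] + μ₁ * μ₂)) / (1 - ρ ^ 2) := by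
    rw [integral_log_inv_bivariateGaussianPDF_of_map_eq_gaussianReal hρ h₁ h₂, hα1, hβ1]
    field_simp
    ring
  refine ⟨⟨gaussianAntitheticCoupling μ₁ μ₂ α β, inferInstance,
    map_fst_gaussianAntitheticCoupling .., map_snd_gaussianAntitheticCoupling .., ?_⟩, ?_⟩
  · refine ((hvalue _ (map_fst_gaussianAntitheticCoupling ..)
      (map_snd_gaussianAntitheticCoupling ..)).trans ?_).symm
    rw [covariance_gaussianAntitheticCoupling]
    ring
  · rintro v ⟨R, hR, h₁, h₂, rfl⟩
    refine (hvalue R h₁ h₂).trans_le ?_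
    have hcov := mul_le_mul_of_nonneg_left
      (neg_sqrt_mul_le_covariance_of_map_eq_gaussianReal h₁ h₂) hρ0
    gcongr
    linarith

/-- the maximum over couplings `R` of two Gaussians (with unit second
moments) of `∫ log(1/π_ρ(x,y)) dR` equals
`log(2π√(1−ρ²)) + (1 + ρ(√(αβ) − μ₁μ₂))/(1−ρ²)`, and it is attained. -/
theorem stmt_7 (ρ : ℝ) (hρ0 : 0 ≤ ρ) (hρ1 : ρ < 1)
    (μ₁ μ₂ : ℝ) (α β : NNReal) (hα : 0 < α) (hβ : 0 < β)
    (hα1 : (α : ℝ) + μ₁ ^ 2 = 1) (hβ1 : (β : ℝ) + μ₂ ^ 2 = 1) :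
    IsGreatest
      {v : ℝ | ∃ R : Measure (ℝ × ℝ), IsProbabilityMeasure R ∧
        R.map Prod.fst = gaussianReal μ₁ α ∧
        R.map Prod.snd = gaussianReal μ₂ β ∧
        v = ∫ q : ℝ × ℝ,
          Real.log ((2 * Real.pi * Real.sqrt (1 - ρ ^ 2))⁻¹ *
            Real.exp (-(q.1 ^ 2 - 2 * ρ * q.1 * q.2 + q.2 ^ 2) / (2 * (1 - ρ ^ 2))))⁻¹ ∂ R}
      (Real.log (2 * Real.pi * Real.sqrt (1 - ρ ^ 2)) +
        (1 + ρ * (Real.sqrt ((α : ℝ) * (β : ℝ)) - μ₁ * μ₂)) / (1 - ρ ^ 2)) :=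
  stmt_7_general ρ hρ0 hρ1 μ₁ μ₂ α β hα1 hβ1
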